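/- arXiv:math/0010140 — 5 statements merged into one kernel-verified Lean document; each statement's English description precedes it below -/
import Mathlib

section
/- (Theorem 3.1; convergence.) Let k₁,…,k_l be positive integers and k_{l+1} ≥ 0 an integer. If k_i ≥ 2 for some i with 1 ≤ i ≤ l, then the family of positive terms 1/((n₁−n_{l+1}) n₁^{k₁} ⋯ n_l^{k_l}) indexed by integers n₁ > n₂ > ⋯ > n_l > n_{l+1} ≥ 0 is summable (T(k₁,…,k_l) is finite). If k_i ≥ 2 for some 1 ≤ i ≤ l or k_{l+1} ≥ 1, then the family 1/((n₁−n_{l+1}) n₁^{k₁} ⋯ n_l^{k_l} n_{l+1}^{k_{l+1}}) indexed by integers n₁ > n₂ > ⋯ > n_l > n_{l+1} > 0 is summable (S(k₁,…,k_l,k_{l+1}) is finite). -/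
/-!
Write `d_j = n_j - n_{j+1}` for `j ≤ l`, `b = n_{l+1}` (in Lean the tuple is `n 0, …, n l`)
and `q = 1 + ε` with `ε = 1/(2l)`. Then `((b+1) d_1 ⋯ d_l)^q ≤ (b+1) (n_1 - b) n_1 ⋯ n_l`:
split `d_j^q = d_j^{1/l} d_j^{1-ε}`, bound `∏ d_j^{1/l}` by AM–GM by `∑ d_j = n_1 - b`, and
`(b+1)^ε ∏ d_j^{1-ε}` by `∏ n_j`, since `b + 1` and every `d_j` are at most `n_j`.
Both denominators of the theorem dominate a constant times `(b+1) (n_1 - b) n_1 ⋯ n_l`: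
an exponent `k_p ≥ 2` supplies the extra factor `n_p > b`, and in `S` the factor
`n_{l+1}^m ≥ b ≥ (b+1)/2` does. As `n ↦ (d, b)` is injective, the summands are dominated by
`((b+1) d_1 ⋯ d_l)^{-q}`, whose sum over `(d, b)` is a product of `p`-series with `p = q > 1`.
-/

open Finset

theorem Summable.fin_pi_prod {α : Type*} {f : α → ℝ} (hf : Summable f) (hf0 : 0 ≤ f) :
    ∀ l : ℕ, Summable fun x : Fin l → α => ∏ i, f (x i)
  | 0 => by simpa using summable_of_hasFiniteSupport (Set.toFinite _)
  | l + 1 => by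
    refine (Fin.consEquiv fun _ => α).summable_iff.mp ?_
    have := hf.mul_of_nonneg (hf.fin_pi_prod hf0 l) hf0
      fun x => prod_nonneg fun i _ => hf0 (x i)
    simpa [Function.comp_def, Fin.consEquiv, Fin.prod_univ_succ] using this

theorem prod_rpow_inv_card_le_sum {ι : Type*} {s : Finset ι} (hs : s.Nonempty) {x : ι → ℝ}
    (hx : ∀ j ∈ s, 0 ≤ x j) : ∏ j ∈ s, x j ^ (#s : ℝ)⁻¹ ≤ ∑ j ∈ s, x j := by
  have hcard : (1 : ℝ) ≤ #s := by exact_mod_cast hs.card_pos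
  calc ∏ j ∈ s, x j ^ (#s : ℝ)⁻¹ ≤ ∑ j ∈ s, (#s : ℝ)⁻¹ * x j :=
        Real.geom_mean_le_arith_mean_weighted s _ x (fun _ _ => by positivity)
          (by simp [(zero_lt_one.trans_le hcard).ne']) hx
    _ ≤ ∑ j ∈ s, x j := by
        rw [← mul_sum]
        exact mul_le_of_le_one_left (sum_nonneg hx) (inv_le_one_of_one_le₀ hcard)

theorem rpow_mul_prod_rpow_le {ι : Type*} {s : Finset ι} (hs : s.Nonempty) {x y : ι → ℝ}
    {B : ℝ} (hB : 0 ≤ B) (hx : ∀ j ∈ s, 0 ≤ x j) (hxy : ∀ j ∈ s, x j ≤ y j)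
    (hBy : B ≤ ∏ j ∈ s, y j) :
    B ^ (1 + (2 * #s : ℝ)⁻¹) * ∏ j ∈ s, x j ^ (1 + (2 * #s : ℝ)⁻¹) ≤
      B * (∑ j ∈ s, x j) * ∏ j ∈ s, y j := by
  set ε : ℝ := (2 * #s : ℝ)⁻¹
  have hcard : (1 : ℝ) ≤ #s := by exact_mod_cast hs.card_pos
  have h_inv_card : (#s : ℝ)⁻¹ = ε + ε := by simp only [ε]; field_simp; ring
  have hε : 0 ≤ ε := by positivity
  have hε1 : ε ≤ 1 := inv_le_one_of_one_le₀ (by linarith)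
  set P := ∏ j ∈ s, y j
  have hP : 0 ≤ P := prod_nonneg fun j hj => (hx j hj).trans (hxy j hj)
  have hx_pow : 0 ≤ ∏ j ∈ s, x j ^ (1 - ε) := prod_nonneg fun j hj => by
    have := hx j hj; positivity
  have h_split : ∏ j ∈ s, x j ^ (1 + ε) =
      (∏ j ∈ s, x j ^ (#s : ℝ)⁻¹) * ∏ j ∈ s, x j ^ (1 - ε) := by
    rw [← prod_mul_distrib]
    refine prod_congr rfl fun j hj => ?_
    rw [← Real.rpow_add' (hx j hj) (by linarith)]
    congr 1
    linarith
  have h_x : ∏ j ∈ s, x j ^ (1 - ε) ≤ P ^ (1 - ε) := by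
    rw [← Real.finsetProd_rpow s y fun j hj => (hx j hj).trans (hxy j hj)]
    exact prod_le_prod (fun j hj => by have := hx j hj; positivity)
      fun j hj => Real.rpow_le_rpow (hx j hj) (hxy j hj) (by linarith)
  have h_B : B ^ (1 + ε) ≤ B * P ^ ε := by
    rw [Real.rpow_add' hB (by linarith), Real.rpow_one]
    exact mul_le_mul_of_nonneg_left (Real.rpow_le_rpow hB hBy hε) hB
  calc B ^ (1 + ε) * ∏ j ∈ s, x j ^ (1 + ε)
      ≤ (B * P ^ ε) * ((∑ j ∈ s, x j) * P ^ (1 - ε)) := by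
        rw [h_split]
        refine mul_le_mul h_B (mul_le_mul (prod_rpow_inv_card_le_sum hs hx) h_x hx_pow
          (sum_nonneg hx)) (mul_nonneg (prod_nonneg fun j hj => ?_) hx_pow) (by positivity)
        have := hx j hj
        positivity
    _ = B * (∑ j ∈ s, x j) * P := by
        rw [mul_mul_mul_comm, mul_assoc, ← Real.rpow_add' hP (by norm_num), add_sub_cancel,
          Real.rpow_one, mul_assoc]

theorem Nat.mul_prod_le_prod_pow {ι : Type*} {s : Finset ι} {y K : ι → ℕ}
    (hy : ∀ j ∈ s, 1 ≤ y j) (hK : ∀ j ∈ s, 1 ≤ K j) {p : ι} (hp : p ∈ s) (hKp : 2 ≤ K p) :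
    y p * ∏ j ∈ s, y j ≤ ∏ j ∈ s, y j ^ K j := by
  calc y p * ∏ j ∈ s, y j
      ≤ (∏ j ∈ s, y j ^ (K j - 1)) * ∏ j ∈ s, y j := by
        gcongr
        exact (Nat.le_self_pow (by omega) _).trans
          (single_le_prod' (fun j hj => Nat.one_le_pow _ _ (hy j hj)) hp)
    _ = ∏ j ∈ s, y j ^ K j := by
        rw [← prod_mul_distrib]
        exact prod_congr rfl fun j hj => pow_sub_one_mul (by have := hK j hj; omega) _

variable {l : ℕ} {n : Fin (l + 1) → ℕ}

def gaps (n : Fin (l + 1) → ℕ) (j : Fin l) : ℕ := n j.castSucc - n j.succ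

theorem Antitone.sum_gaps (hn : Antitone n) :
    ∑ j, (gaps n j : ℝ) = n 0 - n (Fin.last l) := by
  have h_cast := Fin.sum_univ_castSucc fun i => (n i : ℝ)
  have h_succ := Fin.sum_univ_succ fun i => (n i : ℝ)
  have h_gap (j : Fin l) : (gaps n j : ℝ) = n j.castSucc - n j.succ :=
    Nat.cast_sub (hn Fin.castSucc_lt_succ.le)
  simp only [h_gap, sum_sub_distrib]
  linarith

theorem Antitone.eq_of_gaps_eq {n' : Fin (l + 1) → ℕ} (hn : Antitone n) (hn' : Antitone n')
    (h_gaps : gaps n = gaps n') (h_last : n (Fin.last l) = n' (Fin.last l)) : n = n' := by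
  funext i
  induction i using Fin.reverseInduction with
  | last => exact h_last
  | cast j ih =>
    have := hn (Fin.castSucc_lt_succ (i := j)).le
    have := hn' (Fin.castSucc_lt_succ (i := j)).le
    have := congrFun h_gaps j
    simp only [gaps] at this
    omega

theorem StrictAnti.one_le_gaps (hn : StrictAnti n) (j : Fin l) : 1 ≤ gaps n j :=
  Nat.le_sub_of_add_le' (hn (Fin.castSucc_lt_succ (i := j)))

theorem StrictAnti.last_lt (hn : StrictAnti n) (j : Fin l) : n (Fin.last l) < n j.castSucc :=
  hn (Fin.castSucc_lt_last j)

theorem StrictAnti.succ_last_mul_prod_le_prod_pow (hn : StrictAnti n) {K : Fin l → ℕ}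
    (hK : ∀ j, 1 ≤ K j) {p : Fin l} (hKp : 2 ≤ K p) :
    (n (Fin.last l) + 1) * ∏ j : Fin l, n j.castSucc ≤ ∏ j : Fin l, n j.castSucc ^ K j :=
  (Nat.mul_le_mul_right _ (hn.last_lt p)).trans <| Nat.mul_prod_le_prod_pow
    (fun j _ => (Nat.zero_le _).trans_lt (hn.last_lt j)) (fun j _ => hK j) (mem_univ p) hKp

theorem succ_mul_prod_le_two_mul_prod_pow_mul_pow {b m : ℕ} (hb : 1 ≤ b) (hm : 1 ≤ m)
    {y K : Fin l → ℕ} (hK : ∀ j, 1 ≤ K j) :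
    (b + 1) * ∏ j, y j ≤ 2 * ((∏ j, y j ^ K j) * b ^ m) := by
  have h_b : b + 1 ≤ 2 * b ^ m := by
    have := Nat.le_self_pow (by omega : m ≠ 0) b
    omega
  have h_prod : ∏ j, y j ≤ ∏ j, y j ^ K j :=
    prod_le_prod' fun j _ => Nat.le_self_pow (by have := hK j; omega) _
  calc (b + 1) * ∏ j, y j ≤ 2 * b ^ m * ∏ j, y j ^ K j := Nat.mul_le_mul h_b h_prod
    _ = 2 * ((∏ j, y j ^ K j) * b ^ m) := by ring

theorem StrictAnti.rpow_mul_prod_gaps_rpow_le (hn : StrictAnti n) (hl : l ≠ 0) :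
    ((n (Fin.last l) : ℝ) + 1) ^ (1 + (2 * l : ℝ)⁻¹) *
        ∏ j, (gaps n j : ℝ) ^ (1 + (2 * l : ℝ)⁻¹) ≤
      ((n (Fin.last l) : ℝ) + 1) * ((n 0 : ℝ) - n (Fin.last l)) *
        ∏ j : Fin l, (n j.castSucc : ℝ) := by
  have h_last : n (Fin.last l) + 1 ≤ ∏ j : Fin l, n j.castSucc :=
    (hn.last_lt ⟨0, Nat.pos_of_ne_zero hl⟩).trans_le <|
      single_le_prod' (f := fun j : Fin l => n j.castSucc)
        (fun j _ => (Nat.zero_le _).trans_lt (hn.last_lt j)) (mem_univ _)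
  have := rpow_mul_prod_rpow_le (s := univ) (B := (n (Fin.last l) : ℝ) + 1)
    (x := fun j => (gaps n j : ℝ)) (y := fun j => (n j.castSucc : ℝ))
    (univ_nonempty_iff.mpr ⟨⟨0, Nat.pos_of_ne_zero hl⟩⟩) (by positivity)
    (fun j _ => by positivity) (fun j _ => by exact_mod_cast Nat.sub_le _ _)
    (by exact_mod_cast h_last)
  simpa [hn.antitone.sum_gaps] using this

theorem StrictAnti.mul_rpow_mul_prod_gaps_rpow_le (hn : StrictAnti n) (hl : l ≠ 0) {c Y : ℝ}
    (hc : 0 ≤ c) (hY : c * (((n (Fin.last l) + 1) * ∏ j : Fin l, n j.castSucc : ℕ) : ℝ) ≤ Y) :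
    c * (((n (Fin.last l) : ℝ) + 1) ^ (1 + (2 * l : ℝ)⁻¹) *
        ∏ j, (gaps n j : ℝ) ^ (1 + (2 * l : ℝ)⁻¹)) ≤ ((n 0 : ℝ) - n (Fin.last l)) * Y := by
  have h_diff : (0 : ℝ) ≤ n 0 - n (Fin.last l) := by
    rw [sub_nonneg]
    exact_mod_cast hn.antitone (Fin.zero_le (Fin.last l))
  calc _ ≤ c * (((n (Fin.last l) : ℝ) + 1) * ((n 0 : ℝ) - n (Fin.last l)) *
          ∏ j : Fin l, (n j.castSucc : ℝ)) :=
        mul_le_mul_of_nonneg_left (hn.rpow_mul_prod_gaps_rpow_le hl) hc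
    _ = ((n 0 : ℝ) - n (Fin.last l)) *
          (c * (((n (Fin.last l) + 1) * ∏ j : Fin l, n j.castSucc : ℕ) : ℝ)) := by
        push_cast
        ring
    _ ≤ _ := mul_le_mul_of_nonneg_left hY h_diff

theorem summable_inv_sub_mul_of_le {P : (Fin (l + 1) → ℕ) → Prop} (hl : l ≠ 0)
    (hP : ∀ n, P n → StrictAnti n) {Y : (Fin (l + 1) → ℕ) → ℝ} {c : ℝ} (hc : 0 < c)
    (hY : ∀ n, P n →
      c * (((n (Fin.last l) + 1) * ∏ j : Fin l, n j.castSucc : ℕ) : ℝ) ≤ Y n) :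
    Summable fun n : {n // P n} => (((n.1 0 : ℝ) - n.1 (Fin.last l)) * Y n.1)⁻¹ := by
  set q : ℝ := 1 + (2 * l : ℝ)⁻¹
  have hq : 1 < q := lt_add_of_pos_right 1 (by positivity)
  have h_summable : Summable fun x : (Fin l → ℕ) × ℕ =>
      (∏ j, ((x.1 j : ℝ) ^ q)⁻¹) * (((x.2 : ℝ) + 1) ^ q)⁻¹ := by
    have h_inv := Real.summable_nat_rpow_inv.mpr hq
    have h_shift : Summable fun b : ℕ => (((b : ℝ) + 1) ^ q)⁻¹ := by
      simpa using (summable_nat_add_iff 1).mpr h_inv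
    exact (h_inv.fin_pi_prod (fun _ => by positivity) l).mul_of_nonneg h_shift
      (fun _ => prod_nonneg fun _ _ => by positivity) fun _ => by positivity
  have h_inj : Function.Injective fun n : {n // P n} => (gaps n.1, n.1 (Fin.last l)) :=
    fun n n' h => Subtype.ext <| (hP n n.2).antitone.eq_of_gaps_eq (hP n' n'.2).antitone
      (Prod.ext_iff.mp h).1 (Prod.ext_iff.mp h).2
  refine Summable.of_nonneg_of_le (fun n => ?_) (fun n => ?_)
    ((h_summable.mul_left c⁻¹).comp_injective h_inj)
  all_goals
    obtain ⟨n, hn⟩ := n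
    have h_pos : 0 < ((n (Fin.last l) : ℝ) + 1) ^ q * ∏ j, (gaps n j : ℝ) ^ q :=
      mul_pos (by positivity) (prod_pos fun j _ => by
        have := (hP n hn).one_le_gaps j; positivity)
    have h_le := (hP n hn).mul_rpow_mul_prod_gaps_rpow_le hl hc.le (hY n hn)
  · exact inv_nonneg.mpr ((mul_pos hc h_pos).le.trans h_le)
  · calc (((n 0 : ℝ) - n (Fin.last l)) * Y n)⁻¹
        ≤ (c * (((n (Fin.last l) : ℝ) + 1) ^ q * ∏ j, (gaps n j : ℝ) ^ q))⁻¹ :=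
          inv_anti₀ (mul_pos hc h_pos) h_le
      _ = _ := by simp [prod_inv_distrib, mul_comm]

/-- **Theorem 3.1 (convergence).**  Let `k₁,…,k_l` be positive integers and `m = k_{l+1} ≥ 0`.
If some `k_i ≥ 2` then the positive family
`1/((n₁-n_{l+1}) n₁^{k₁} ⋯ n_l^{k_l})`, indexed by the strictly decreasing tuples
`n₁ > ⋯ > n_l > n_{l+1} ≥ 0`, is summable (so `T(k₁,…,k_l)` is finite).
If some `k_i ≥ 2` or `m ≥ 1`, then
`1/((n₁-n_{l+1}) n₁^{k₁} ⋯ n_l^{k_l} n_{l+1}^m)`, indexed by the strictly decreasing tuples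
`n₁ > ⋯ > n_l > n_{l+1} > 0`, is summable (so `S(k₁,…,k_l,m)` is finite). -/
theorem T_and_S_summable (k : List ℕ) (hne : k ≠ []) (hpos : ∀ a ∈ k, 1 ≤ a) (m : ℕ) :
    ((∃ a ∈ k, 2 ≤ a) →
      Summable (fun n : {n : Fin (k.length + 1) → ℕ //
          ∀ i j : Fin (k.length + 1), i < j → n j < n i} =>
        (((n.1 0 : ℝ) - (n.1 (Fin.last k.length) : ℝ)) *
          ∏ i : Fin k.length, (n.1 i.castSucc : ℝ) ^ k.get i)⁻¹)) ∧
    (((∃ a ∈ k, 2 ≤ a) ∨ 1 ≤ m) →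
      Summable (fun n : {n : Fin (k.length + 1) → ℕ //
          (∀ i j : Fin (k.length + 1), i < j → n j < n i) ∧ ∀ i, 1 ≤ n i} =>
        (((n.1 0 : ℝ) - (n.1 (Fin.last k.length) : ℝ)) *
          (∏ i : Fin k.length, (n.1 i.castSucc : ℝ) ^ k.get i) *
          (n.1 (Fin.last k.length) : ℝ) ^ m)⁻¹)) := by
  have hl : k.length ≠ 0 := by simpa using hne
  have hK (j : Fin k.length) : 1 ≤ k.get j := hpos _ (k.get_mem j)
  refine ⟨fun ⟨a, ha, ha2⟩ => ?_, fun h => ?_⟩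
  · obtain ⟨p, rfl⟩ := List.mem_iff_get.mp ha
    refine summable_inv_sub_mul_of_le (P := fun n => ∀ i j, i < j → n j < n i)
      (Y := fun n => ∏ i : Fin k.length, (n i.castSucc : ℝ) ^ k.get i) hl (fun n hn => hn)
      one_pos fun n hn => ?_
    rw [one_mul]
    exact_mod_cast StrictAnti.succ_last_mul_prod_le_prod_pow hn hK ha2
  have h_denom (n : Fin (k.length + 1) → ℕ) (hn : StrictAnti n) (h_one : ∀ i, 1 ≤ n i) :
      (n (Fin.last k.length) + 1) * ∏ j : Fin k.length, n j.castSucc ≤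
        2 * ((∏ j : Fin k.length, n j.castSucc ^ k.get j) * n (Fin.last k.length) ^ m) := by
    rcases h with ⟨a, ha, ha2⟩ | hm
    · obtain ⟨p, rfl⟩ := List.mem_iff_get.mp ha
      exact (hn.succ_last_mul_prod_le_prod_pow hK ha2).trans <|
        (Nat.le_mul_of_pos_right _ (Nat.pow_pos (h_one _))).trans
          (Nat.le_mul_of_pos_left _ two_pos)
    · exact succ_mul_prod_le_two_mul_prod_pow_mul_pow (h_one _) hm hK
  refine (summable_inv_sub_mul_of_le
    (P := fun n => (∀ i j, i < j → n j < n i) ∧ ∀ i, 1 ≤ n i)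
    (Y := fun n => (∏ i : Fin k.length, (n i.castSucc : ℝ) ^ k.get i) *
      (n (Fin.last k.length) : ℝ) ^ m) hl (fun n hn => hn.1) (c := 2⁻¹) (by norm_num)
    fun n hn => ?_).congr fun n => by rw [mul_assoc]
  rw [inv_mul_le_iff₀ two_pos]
  exact_mod_cast h_denom n hn.1 hn.2
end

section
/- (Equation (10).) For positive integers k₂,…,k_l and an integer k_{l+1} ≥ 0, assume that k_{l+1} ≥ 1 or k_i ≥ 2 for some 2 ≤ i ≤ l. Then S(1, k₂,…,k_l, k_{l+1}) = T(k₂,…,k_l, k_{l+1}+1). -/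
/-- The multiple zeta value `ζ(k₁,…,k_l) = ∑_{n₁>n₂>⋯>n_l≥1} 1/(n₁^{k₁} ⋯ n_l^{k_l})`. -/
noncomputable def mzv (k : List ℕ) : ℝ :=
  ∑' n : Fin k.length → ℕ,
    if (∀ i j : Fin k.length, i < j → n j < n i) ∧ (∀ i, 1 ≤ n i) then
      ∏ i : Fin k.length, ((n i : ℝ) ^ k.get i)⁻¹
    else 0

/-- `T(k₁,…,k_l) = ∑_{n₁>⋯>n_l>n_{l+1}≥0} 1/((n₁-n_{l+1}) n₁^{k₁} ⋯ n_l^{k_l})`. -/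
noncomputable def Tval (k : List ℕ) : ℝ :=
  ∑' n : Fin (k.length + 1) → ℕ,
    if ∀ i j : Fin (k.length + 1), i < j → n j < n i then
      (((n 0 : ℝ) - (n (Fin.last k.length) : ℝ)) *
        ∏ i : Fin k.length, (n i.castSucc : ℝ) ^ k.get i)⁻¹
    else 0

/-- `S(k₁,…,k_l,m) = ∑_{n₁>⋯>n_l>n_{l+1}>0} 1/((n₁-n_{l+1}) n₁^{k₁} ⋯ n_l^{k_l} n_{l+1}^m)`. -/
noncomputable def Sval (k : List ℕ) (m : ℕ) : ℝ :=
  ∑' n : Fin (k.length + 1) → ℕ,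
    if (∀ i j : Fin (k.length + 1), i < j → n j < n i) ∧ (∀ i, 1 ≤ n i) then
      (((n 0 : ℝ) - (n (Fin.last k.length) : ℝ)) *
        (∏ i : Fin k.length, (n i.castSucc : ℝ) ^ k.get i) *
        (n (Fin.last k.length) : ℝ) ^ m)⁻¹
    else 0

/-!
Both sides are sums of nonnegative terms, so they may be compared in `ℝ≥0∞`, where Tonelli lets
us sum over the outermost index `n₁` of `S` and over the innermost index `d = n_{l+2}` of `T`
first. With `a = n₂` and `c = n_{l+1}` fixed, the `n₁`-sum telescopes:
`∑_{n₁>a} 1/((n₁-c) n₁) = (1/c) ∑_{n₁>a} (1/(n₁-c) - 1/n₁) = (1/c) ∑_{0≤d<c} 1/(a-d)`,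
and the right-hand side is exactly the `d`-sum of `T(k₂,…,k_l,k_{l+1}+1)`.
-/

open Filter Finset Topology

theorem tsum_eq_toReal_tsum_ofReal {ι : Type*} {f : ι → ℝ} (hf : ∀ i, 0 ≤ f i) :
    ∑' i, f i = (∑' i, ENNReal.ofReal (f i)).toReal := by
  rw [ENNReal.tsum_toReal_eq fun _ => ENNReal.ofReal_ne_top]
  simp only [ENNReal.toReal_ofReal (hf _)]

theorem tsum_eq_tsum_of_hasSum_cons_snoc {α : Type*} {n : ℕ} {F G : (Fin (n + 1) → α) → ℝ}
    (hF : ∀ v, 0 ≤ F v) (hG : ∀ v, 0 ≤ G v)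
    (h : ∀ p : Fin n → α, ∃ s, HasSum (fun x ↦ F (Fin.cons x p)) s ∧
      HasSum (fun x ↦ G (Fin.snoc p x)) s) :
    ∑' v, F v = ∑' v, G v := by
  rw [tsum_eq_toReal_tsum_ofReal hF, tsum_eq_toReal_tsum_ofReal hG,
    ← (Fin.consEquiv fun _ ↦ α).tsum_eq, ← (Fin.snocEquiv fun _ ↦ α).tsum_eq,
    ENNReal.tsum_prod', ENNReal.tsum_prod', ENNReal.tsum_comm, ENNReal.tsum_comm (α := α)]
  congr 1
  refine tsum_congr fun p ↦ ?_
  obtain ⟨s, hFs, hGs⟩ := h p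
  have tsum_ofReal {f : α → ℝ} (hf : ∀ x, 0 ≤ f x) (hfs : HasSum f s) :
      ∑' x, ENNReal.ofReal (f x) = ENNReal.ofReal s := by
    rw [← ENNReal.ofReal_tsum_of_nonneg hf hfs.summable, hfs.tsum_eq]
  exact (tsum_ofReal (fun _ ↦ hF _) hFs).trans (tsum_ofReal (fun _ ↦ hG _) hGs).symm

theorem Fin.strictAnti_cons_iff {α : Type*} [Preorder α] {n : ℕ} (x : α) (p : Fin (n + 1) → α) :
    StrictAnti (Fin.cons x p : Fin (n + 2) → α) ↔ p 0 < x ∧ StrictAnti p := by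
  simp [Fin.strictAnti_iff_succ_lt (n := n + 1), Fin.forall_fin_succ,
    Fin.strictAnti_iff_succ_lt (f := p)]

theorem Fin.strictAnti_snoc_iff {α : Type*} [Preorder α] {n : ℕ} (p : Fin (n + 1) → α) (x : α) :
    StrictAnti (Fin.snoc p x : Fin (n + 2) → α) ↔ x < p (Fin.last n) ∧ StrictAnti p := by
  simp [Fin.strictAnti_iff_succ_lt (n := n + 1), Fin.forall_fin_succ',
    Fin.strictAnti_iff_succ_lt (f := p), ← Fin.castSucc_succ, and_comm]

theorem Antitone.hasSum_sub_comp_add {f : ℕ → ℝ} (hf : Antitone f)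
    (hf0 : Tendsto f atTop (𝓝 0)) (c : ℕ) :
    HasSum (fun j ↦ f j - f (j + c)) (∑ i ∈ range c, f i) := by
  have hpartial (N : ℕ) : ∑ j ∈ range N, (f j - f (j + c)) =
      ∑ i ∈ range c, f i - ∑ i ∈ range c, f (N + i) := by
    have := sum_range_add f N c
    rw [add_comm N c, sum_range_add f c N] at this
    simp only [sum_sub_distrib, add_comm _ c]
    linarith
  rw [hasSum_iff_tendsto_nat_of_nonneg (fun j ↦ sub_nonneg.2 (hf (j.le_add_right c)))]
  simp only [hpartial]
  have htail : Tendsto (fun N ↦ ∑ i ∈ range c, f (N + i)) atTop (𝓝 0) := by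
    simpa using tendsto_finsetSum (range c) fun i _ ↦ hf0.comp (tendsto_add_atTop_nat i)
  simpa using tendsto_const_nhds.sub htail

theorem hasSum_ite_lt_inv_sub_mul_inv {a c : ℕ} (hc : 1 ≤ c) (hca : c ≤ a) :
    HasSum (fun x : ℕ ↦ if a < x then (((x : ℝ) - c) * x)⁻¹ else 0)
      (∑ d ∈ range c, (((a : ℝ) - d) * c)⁻¹) := by
  set g : ℕ → ℝ := fun i ↦ ((i : ℝ) + (a + 1 - c))⁻¹
  have hb : (0 : ℝ) < a + 1 - c := by
    have : (c : ℝ) ≤ a := by exact_mod_cast hca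
    linarith
  have hg : Antitone g := antitone_nat_of_succ_le fun i ↦
    inv_anti₀ (by positivity) (by push_cast; linarith)
  have hg0 : Tendsto g atTop (𝓝 0) :=
    tendsto_inv_atTop_zero.comp (tendsto_atTop_add_const_right _ _ tendsto_natCast_atTop_atTop)
  have htel := (hg.hasSum_sub_comp_add hg0 c).mul_left (c : ℝ)⁻¹
  rw [← hasSum_nat_add_iff' (a + 1)]
  have hhead : ∑ x ∈ range (a + 1), (if a < x then (((x : ℝ) - c) * x)⁻¹ else 0) = 0 :=
    sum_eq_zero fun x hx ↦ if_neg (by simp at hx; omega)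
  have hsum : (c : ℝ)⁻¹ * ∑ i ∈ range c, g i = ∑ d ∈ range c, (((a : ℝ) - d) * c)⁻¹ := by
    rw [mul_sum, ← sum_range_reflect]
    refine sum_congr rfl fun d hd ↦ ?_
    have hd : d < c := mem_range.1 hd
    have hden : ((c - 1 - d : ℕ) : ℝ) + (a + 1 - c) = a - d := by
      rw [Nat.cast_sub (by omega), Nat.cast_sub hc]
      push_cast
      ring
    simp only [g, hden, mul_inv, mul_comm]
  have hterm (j : ℕ) :
      (if a < j + (a + 1) then ((((j + (a + 1) : ℕ) : ℝ) - c) * (j + (a + 1) : ℕ))⁻¹ else 0) =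
        (c : ℝ)⁻¹ * (g j - g (j + c)) := by
    rw [if_pos (by omega)]
    have hc' : (c : ℝ) ≠ 0 := by positivity
    have hj : (j : ℝ) + (a + 1 - c) ≠ 0 := by positivity
    simp only [g]
    push_cast
    rw [show (j : ℝ) + (a + 1) - c = j + (a + 1 - c) by ring]
    field_simp
    ring
  rw [hhead, sub_zero, ← hsum]
  simp only [hterm]
  exact htel

/-- The summands of `Sval` and `Tval`, indexed by an exponent tuple instead of a list so that its
length can be written as `l + 1` and split off with `Fin.cons` / `Fin.snoc`. -/
noncomputable def sSummand {l : ℕ} (k : Fin l → ℕ) (m : ℕ) (n : Fin (l + 1) → ℕ) : ℝ :=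
  if (∀ i j : Fin (l + 1), i < j → n j < n i) ∧ (∀ i, 1 ≤ n i) then
    (((n 0 : ℝ) - (n (Fin.last l) : ℝ)) * (∏ i : Fin l, (n i.castSucc : ℝ) ^ k i) *
      (n (Fin.last l) : ℝ) ^ m)⁻¹
  else 0

noncomputable def tSummand {l : ℕ} (k : Fin l → ℕ) (n : Fin (l + 1) → ℕ) : ℝ :=
  if ∀ i j : Fin (l + 1), i < j → n j < n i then
    (((n 0 : ℝ) - (n (Fin.last l) : ℝ)) * ∏ i : Fin l, (n i.castSucc : ℝ) ^ k i)⁻¹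
  else 0

theorem sSummand_nonneg {l : ℕ} (k : Fin l → ℕ) (m : ℕ) (n : Fin (l + 1) → ℕ) :
    0 ≤ sSummand k m n := by
  unfold sSummand
  split_ifs with h
  · have : (n (Fin.last l) : ℝ) ≤ n 0 :=
      Nat.cast_le.2 (StrictAnti.antitone h.1 (Fin.zero_le _))
    have : 0 ≤ (n 0 : ℝ) - n (Fin.last l) := by linarith
    positivity
  · rfl

theorem tSummand_nonneg {l : ℕ} (k : Fin l → ℕ) (n : Fin (l + 1) → ℕ) :
    0 ≤ tSummand k n := by
  unfold tSummand
  split_ifs with h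
  · have : (n (Fin.last l) : ℝ) ≤ n 0 :=
      Nat.cast_le.2 (StrictAnti.antitone h (Fin.zero_le _))
    have : 0 ≤ (n 0 : ℝ) - n (Fin.last l) := by linarith
    positivity
  · rfl

theorem sSummand_cons {l : ℕ} (e : Fin l → ℕ) (m x : ℕ) (p : Fin (l + 1) → ℕ) :
    sSummand (Fin.cons 1 e) m (Fin.cons x p) =
      if StrictAnti p ∧ 1 ≤ p (Fin.last l) ∧ p 0 < x then
        (((x : ℝ) - p (Fin.last l)) * x)⁻¹ *
          ((∏ i : Fin l, (p i.castSucc : ℝ) ^ e i) * (p (Fin.last l) : ℝ) ^ m)⁻¹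
      else 0 := by
  have hcond : ((∀ i j, i < j → (Fin.cons x p : Fin (l + 2) → ℕ) j <
      (Fin.cons x p : Fin (l + 2) → ℕ) i) ∧
      ∀ i, 1 ≤ (Fin.cons x p : Fin (l + 2) → ℕ) i) ↔
      StrictAnti p ∧ 1 ≤ p (Fin.last l) ∧ p 0 < x := by
    change StrictAnti _ ∧ _ ↔ _
    simp only [Fin.strictAnti_cons_iff, Fin.forall_fin_succ (n := l + 1), Fin.cons_zero,
      Fin.cons_succ]
    constructor
    · rintro ⟨⟨hx, hp⟩, -, hpos⟩
      exact ⟨hp, hpos _, hx⟩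
    · rintro ⟨hp, hc, hx⟩
      exact ⟨⟨hx, hp⟩, by omega, fun i ↦ hc.trans (hp.antitone (Fin.le_last i))⟩
  simp only [sSummand, hcond, ← Fin.succ_last, Fin.cons_zero, Fin.cons_succ, Fin.prod_univ_succ,
    Fin.castSucc_zero, ← Fin.succ_castSucc, pow_one]
  split_ifs
  · rw [← mul_inv]
    ring_nf
  · rfl

theorem tSummand_snoc {l : ℕ} (e : Fin l → ℕ) (m d : ℕ) (p : Fin (l + 1) → ℕ) :
    tSummand (Fin.snoc e (m + 1)) (Fin.snoc p d) =
      if StrictAnti p ∧ d < p (Fin.last l) then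
        (((p 0 : ℝ) - d) * p (Fin.last l))⁻¹ *
          ((∏ i : Fin l, (p i.castSucc : ℝ) ^ e i) * (p (Fin.last l) : ℝ) ^ m)⁻¹
      else 0 := by
  have hcond : (∀ i j, i < j → (Fin.snoc p d : Fin (l + 2) → ℕ) j <
      (Fin.snoc p d : Fin (l + 2) → ℕ) i) ↔
      StrictAnti p ∧ d < p (Fin.last l) := by
    change StrictAnti _ ↔ _
    rw [Fin.strictAnti_snoc_iff, and_comm]
  simp only [tSummand, hcond, Fin.snoc_last, Fin.prod_univ_castSucc, Fin.snoc_castSucc]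
  split_ifs
  · rw [← mul_inv, show (0 : Fin (l + 2)) = (0 : Fin (l + 1)).castSucc from rfl, Fin.snoc_castSucc]
    ring_nf
  · rfl

theorem tsum_sSummand_cons_eq_tsum_tSummand_snoc {l : ℕ} (e : Fin l → ℕ) (m : ℕ) :
    ∑' n, sSummand (Fin.cons 1 e) m n = ∑' n, tSummand (Fin.snoc e (m + 1)) n := by
  refine tsum_eq_tsum_of_hasSum_cons_snoc (sSummand_nonneg _ _) (tSummand_nonneg _) fun p ↦ ?_
  simp only [sSummand_cons, tSummand_snoc]
  set c := p (Fin.last l)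
  set K := ((∏ i : Fin l, (p i.castSucc : ℝ) ^ e i) * (c : ℝ) ^ m)⁻¹
  by_cases hp : StrictAnti p ∧ 1 ≤ c
  · refine ⟨(∑ d ∈ range c, (((p 0 : ℝ) - d) * c)⁻¹) * K, ?_, ?_⟩
    · have hca : c ≤ p 0 := hp.1.antitone (Fin.zero_le _)
      simpa only [hp, true_and, ite_mul, zero_mul]
        using (hasSum_ite_lt_inv_sub_mul_inv hp.2 hca).mul_right K
    · simp only [hp.1, true_and]
      have hG : HasSum (fun d : ℕ ↦ if d < c then (((p 0 : ℝ) - d) * c)⁻¹ * K else 0)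
          (∑ d ∈ range c, if d < c then (((p 0 : ℝ) - d) * c)⁻¹ * K else 0) :=
        hasSum_sum_of_ne_finset_zero fun d hd ↦ if_neg (by simpa using hd)
      rwa [sum_ite_of_true fun d hd ↦ mem_range.1 hd, ← sum_mul] at hG
  · refine ⟨0, ?_, ?_⟩ <;> convert hasSum_zero with x <;> rw [if_neg]
    · exact fun h ↦ hp ⟨h.1, h.2.1⟩
    · exact fun h ↦ hp ⟨h.1, by omega⟩

theorem List.get_cons_eq_finCons {α : Type*} (x : α) (t : List α) :
    (x :: t).get = (Fin.cons x t.get : Fin (t.length + 1) → α) := by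
  funext i
  induction i using Fin.cases <;> simp

theorem List.get_append_singleton_comp_cast {α : Type*} (t : List α) (x : α) :
    (t ++ [x]).get ∘ Fin.cast (by simp) = (Fin.snoc t.get x : Fin (t.length + 1) → α) := by
  funext i
  induction i using Fin.lastCases <;> simp [List.getElem_append_left, List.getElem_append_right]

theorem tsum_tSummand_comp_cast {l l' : ℕ} (h : l = l') (k : Fin l → ℕ) :
    ∑' n, tSummand k n = ∑' n, tSummand (k ∘ Fin.cast h.symm) n := by
  subst h
  rfl

theorem Sval_cons (x : ℕ) (t : List ℕ) (m : ℕ) :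
    Sval (x :: t) m = ∑' n, sSummand (Fin.cons x t.get) m n := by
  change ∑' n, sSummand (x :: t).get m n = _
  rw [List.get_cons_eq_finCons]
  rfl

theorem Tval_append_singleton (t : List ℕ) (x : ℕ) :
    Tval (t ++ [x]) = ∑' n, tSummand (Fin.snoc t.get x) n := by
  change ∑' n, tSummand (t ++ [x]).get n = _
  rw [tsum_tSummand_comp_cast (List.length_append ..), ← List.get_append_singleton_comp_cast]
  rfl

theorem S_one_eq_T_general (t : List ℕ) (m : ℕ) :
    Sval (1 :: t) m = Tval (t ++ [m + 1]) := by
  rw [Sval_cons, Tval_append_singleton]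
  exact tsum_sSummand_cons_eq_tsum_tSummand_snoc t.get m

/-- **Equation (10).**  For positive integers `k₂,…,k_l` and an integer `m = k_{l+1} ≥ 0`
(with `m ≥ 1` or some `k_i ≥ 2` to ensure convergence),
`S(1,k₂,…,k_l,m) = T(k₂,…,k_l,m+1)`. -/
theorem S_one_eq_T (t : List ℕ) (hpos : ∀ b ∈ t, 1 ≤ b) (m : ℕ)
    (h : 1 ≤ m ∨ ∃ b ∈ t, 2 ≤ b) :
    Sval (1 :: t) m = Tval (t ++ [m + 1]) :=
  S_one_eq_T_general t m
end

section
/- (Theorem 4.2, harmonic-product homomorphism.) For all u, v in H⁰ (the ℚ-span of the admissible words), the harmonic product u * v lies in H⁰ and ζ̂(u * v) = ζ̂(u) · ζ̂(v). -/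
/-- `H = ℚ⟨x,y⟩`, modeled as the monoid algebra of the free monoid on two letters
(`false` standing for `x` and `true` standing for `y`). -/
abbrev H : Type := MonoidAlgebra ℚ (FreeMonoid Bool)

/-- The word (monomial) of `H` corresponding to a list of letters. -/
noncomputable def wordAlg (w : List Bool) : H :=
  MonoidAlgebra.of ℚ (FreeMonoid Bool) (FreeMonoid.ofList w)

/-- The generator `x`. -/
noncomputable def X : H := wordAlg [false]
/-- The generator `y`. -/
noncomputable def Y : H := wordAlg [true]

/-- A word is admissible iff it is empty or begins with `x` and ends with `y`. -/
def IsAdmissibleWord (w : List Bool) : Prop :=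
  w = [] ∨ (w.head? = some false ∧ w.getLast? = some true)

/-- `H⁰`, the ℚ-span of the admissible words. -/
noncomputable def H0 : Submodule ℚ H :=
  Submodule.span ℚ {h : H | ∃ w : List Bool, IsAdmissibleWord w ∧ h = wordAlg w}

/-- The exponent sequence of a word: `x^{k₁-1}y ⋯ x^{k_l-1}y ↦ (k₁,…,k_l)`. -/
def toSeq : List Bool → List ℕ
  | [] => []
  | false :: r =>
      match toSeq r with
      | [] => []
      | a :: s => (a + 1) :: s
  | true :: r => 1 :: toSeq r

/-- The value of `ζ̂` on a word: `1` on the empty word, `ζ(k₁,…,k_l)` on the admissible word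
`x^{k₁-1}y ⋯ x^{k_l-1}y` (with `k₁ ≥ 2`), and `0` on non-admissible words. -/
noncomputable def zetaWord (w : List Bool) : ℝ :=
  if w = [] then 1
  else if w.head? = some false ∧ w.getLast? = some true then mzv (toSeq w)
  else 0

/-- The ℚ-linear map `ζ̂ : H → ℝ` sending each word to its `zetaWord` value. -/
noncomputable def zhat (f : H) : ℝ :=
  Finsupp.sum f.coeff fun w c => (c : ℝ) * zetaWord (FreeMonoid.toList w)


/-- The word `x^{p-1} y` (i.e. `z_p`), as a list of letters. -/
def zW (p : ℕ) : List Bool := List.replicate (p - 1) false ++ [true]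

/-!
Truncate `ζ̂`: let `ζ̂_N` send `x^{k₁-1}y ⋯ x^{k_l-1}y` to the partial sum of `ζ(k₁,…,k_l)` over
`N ≥ n₁ > ⋯ > n_l ≥ 1`. Multiplying two such partial sums and splitting according to whether the
outermost variables satisfy `n₁ > m₁`, `n₁ < m₁` or `n₁ = m₁` reproduces the three terms of the
recursion of the harmonic product, so `ζ̂_N(u * v) = ζ̂_N(u) ζ̂_N(v)` holds exactly for every `N`,
by induction on the words. For admissible words the partial sums are bounded (by `2`), hence they
converge to the multiple zeta values, and the identity passes to the limit `N → ∞`.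
-/

open Finset Filter Topology

/-- Split `[1, N]²` into `m < n`, `n < m` and `n = m`. -/
lemma sum_Icc_mul_sum_Icc {R : Type*} [CommSemiring R] (F G : ℕ → R) (N : ℕ) :
    (∑ n ∈ Icc 1 N, F n) * ∑ n ∈ Icc 1 N, G n =
      ∑ n ∈ Icc 1 N, (F n * ∑ m ∈ Icc 1 (n - 1), G m + G n * ∑ m ∈ Icc 1 (n - 1), F m +
        F n * G n) := by
  induction N with
  | zero => simp
  | succ N ih =>
    simp only [sum_Icc_succ_top (Nat.le_add_left 1 N), Nat.add_sub_cancel, ← ih]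
    ring

lemma LinearMap.eqOn_span₂ {R M N P : Type*} [CommSemiring R] [AddCommMonoid M]
    [AddCommMonoid N] [AddCommMonoid P] [Module R M] [Module R N] [Module R P]
    {B B' : M →ₗ[R] N →ₗ[R] P} {s : Set M} {t : Set N} (h : ∀ x ∈ s, ∀ y ∈ t, B x y = B' x y)
    {x : M} {y : N} (hx : x ∈ Submodule.span R s) (hy : y ∈ Submodule.span R t) :
    B x y = B' x y :=
  LinearMap.eqOn_span (f := B x) (g := B' x)
    (fun y hy => LinearMap.eqOn_span (f := B.flip y) (g := B'.flip y) (fun x hx => h x hx y hy) hx)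
    hy

/-- `mzvTrunc N k = ∑_{N ≥ n₁ > ⋯ > n_l ≥ 1} n₁^{-k₁} ⋯ n_l^{-k_l}`. -/
noncomputable def mzvTrunc : ℕ → List ℕ → ℝ
  | _, [] => 1
  | N, k :: t => ∑ n ∈ Icc 1 N, ((n : ℝ) ^ k)⁻¹ * mzvTrunc (n - 1) t

@[simp] lemma mzvTrunc_nil (N : ℕ) : mzvTrunc N [] = 1 := rfl

lemma mzvTrunc_cons (N k : ℕ) (t : List ℕ) :
    mzvTrunc N (k :: t) = ∑ n ∈ Icc 1 N, ((n : ℝ) ^ k)⁻¹ * mzvTrunc (n - 1) t := rfl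

lemma mzvTrunc_nonneg (N : ℕ) (k : List ℕ) : 0 ≤ mzvTrunc N k := by
  induction k generalizing N with
  | nil => simp
  | cons a t ih => exact sum_nonneg fun n _ => mul_nonneg (by positivity) (ih _)

/-- After `n^{-a} ≤ n⁻²` and `m^{-b} ≤ m⁻¹`, summing out `n` with `∑_{m < n ≤ N} n⁻² ≤ m⁻¹`
leaves `m⁻²`. -/
lemma mzvTrunc_cons_cons_le {a b : ℕ} (ha : 2 ≤ a) (hb : 1 ≤ b) (N : ℕ) (t : List ℕ) :
    mzvTrunc N (a :: b :: t) ≤ mzvTrunc N (2 :: t) := by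
  set g : ℕ → ℝ := fun m => ((m : ℝ) ^ 1)⁻¹ * mzvTrunc (m - 1) t
  calc mzvTrunc N (a :: b :: t)
      ≤ ∑ n ∈ Icc 1 N, ∑ m ∈ Icc 1 (n - 1), ((n : ℝ) ^ 2)⁻¹ * g m := by
        simp only [mzvTrunc_cons, mul_sum, g]
        refine sum_le_sum fun n hn => sum_le_sum fun m hm => ?_
        exact mul_le_mul (inv_pow_le_inv_pow_of_le (Nat.one_le_cast.2 (mem_Icc.1 hn).1) ha)
          (mul_le_mul_of_nonneg_right
            (inv_pow_le_inv_pow_of_le (Nat.one_le_cast.2 (mem_Icc.1 hm).1) hb)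
            (mzvTrunc_nonneg _ t)) (mul_nonneg (by positivity) (mzvTrunc_nonneg _ t))
          (by positivity)
    _ = ∑ m ∈ Icc 1 N, (∑ n ∈ Ioc m N, ((n : ℝ) ^ 2)⁻¹) * g m := by
        simp only [sum_mul]
        exact sum_comm' fun n m => by simp only [mem_Icc, mem_Ioc]; omega
    _ ≤ ∑ m ∈ Icc 1 N, (m : ℝ)⁻¹ * g m := by
        refine sum_le_sum fun m hm => ?_
        obtain ⟨hm1, hmN⟩ := mem_Icc.1 hm
        have := mzvTrunc_nonneg (m - 1) t
        gcongr
        exact (sum_Ioc_inv_sq_le_sub (by omega) hmN).trans (sub_le_self _ (by positivity))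
    _ = mzvTrunc N (2 :: t) := by
        rw [mzvTrunc_cons]
        refine sum_congr rfl fun m _ => ?_
        simp only [g, pow_one, pow_two, mul_inv, mul_assoc]

lemma mzvTrunc_cons_le_two {a : ℕ} (ha : 2 ≤ a) (N : ℕ) {t : List ℕ} (ht : ∀ k ∈ t, 1 ≤ k) :
    mzvTrunc N (a :: t) ≤ 2 := by
  induction t generalizing a with
  | nil =>
    calc mzvTrunc N [a] ≤ ∑ n ∈ Icc 1 N, ((n : ℝ) ^ 2)⁻¹ := by
          simp only [mzvTrunc_cons, mzvTrunc_nil, mul_one]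
          exact sum_le_sum fun n hn =>
            inv_pow_le_inv_pow_of_le (Nat.one_le_cast.2 (mem_Icc.1 hn).1) ha
      _ ≤ 2 := by
          rw [show Icc 1 N = Ioo 0 (N + 1) by ext; simp only [mem_Icc, mem_Ioo]; omega]
          simpa using sum_Ioo_inv_sq_le (α := ℝ) 0 (N + 1)
  | cons b t ih =>
    exact (mzvTrunc_cons_cons_le ha (ht b List.mem_cons_self) N t).trans
      (ih le_rfl fun k hk => ht k (List.mem_cons_of_mem b hk))

def decreasingTuples (l N : ℕ) : Finset (Fin l → ℕ) :=
  (Fintype.piFinset fun _ => Iic N).filter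
    fun n => (∀ i j : Fin l, i < j → n j < n i) ∧ ∀ i, 1 ≤ n i

lemma mem_decreasingTuples {l N : ℕ} {n : Fin l → ℕ} :
    n ∈ decreasingTuples l N ↔
      (∀ i, n i ≤ N) ∧ (∀ i j : Fin l, i < j → n j < n i) ∧ ∀ i, 1 ≤ n i := by
  simp [decreasingTuples]

lemma cons_mem_decreasingTuples {l N m : ℕ} {v : Fin l → ℕ} :
    Fin.cons m v ∈ decreasingTuples (l + 1) N ↔ m ∈ Icc 1 N ∧ v ∈ decreasingTuples l (m - 1) := by
  simp only [mem_decreasingTuples, Fin.forall_fin_succ, Fin.cons_zero, Fin.cons_succ, mem_Icc,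
    Fin.succ_pos, Fin.succ_lt_succ_iff, Fin.not_lt_zero, forall_const, IsEmpty.forall_iff,
    true_and]
  constructor
  · rintro ⟨⟨hmN, -⟩, ⟨hlt, hdec⟩, hm1, hv1⟩
    exact ⟨⟨hm1, hmN⟩, fun i => by have := hlt i; omega, hdec, hv1⟩
  · rintro ⟨⟨hm1, hmN⟩, hle, hdec, hv1⟩
    exact ⟨⟨hmN, fun i => by have := hle i; omega⟩, ⟨fun i => by have := hle i; omega, hdec⟩,
      hm1, hv1⟩

lemma mzvTrunc_eq_sum (N : ℕ) (k : List ℕ) :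
    mzvTrunc N k = ∑ n ∈ decreasingTuples k.length N, ∏ i, ((n i : ℝ) ^ k.get i)⁻¹ := by
  induction k generalizing N with
  | nil => simp [mzvTrunc, decreasingTuples]
  | cons a t ih =>
    simp_rw [mzvTrunc_cons, ih, mul_sum]
    rw [sum_sigma']
    refine sum_bij' (fun x _ => Fin.cons x.1 x.2) (fun n _ => ⟨n 0, Fin.tail n⟩) ?_ ?_ ?_ ?_ ?_
    · rintro ⟨m, v⟩ h
      exact cons_mem_decreasingTuples.2 (mem_sigma.1 h)
    · intro n (h : n ∈ decreasingTuples (t.length + 1) N)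
      rw [← Fin.cons_self_tail n, cons_mem_decreasingTuples] at h
      exact mem_sigma.2 h
    · rintro ⟨m, v⟩ _
      simp
    · intro n _
      exact Fin.cons_self_tail n
    · rintro ⟨m, v⟩ _
      simp [Fin.prod_univ_succ, mul_comm]

/-- `mzv k` is by definition `∑' n, mzvTerm k n`. -/
noncomputable def mzvTerm (k : List ℕ) (n : Fin k.length → ℕ) : ℝ :=
  if (∀ i j : Fin k.length, i < j → n j < n i) ∧ (∀ i, 1 ≤ n i) then
    ∏ i : Fin k.length, ((n i : ℝ) ^ k.get i)⁻¹
  else 0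

lemma sum_piFinset_mzvTerm (N : ℕ) (k : List ℕ) :
    ∑ n ∈ Fintype.piFinset (fun _ => Iic N), mzvTerm k n = mzvTrunc N k := by
  rw [mzvTrunc_eq_sum, decreasingTuples, sum_filter]
  rfl

lemma tendsto_piFinset_Iic (ι : Type*) [Fintype ι] [DecidableEq ι] :
    Tendsto (fun N : ℕ => Fintype.piFinset fun _ : ι => Iic N) atTop atTop :=
  tendsto_atTop_atTop.2 fun s => ⟨s.sup fun n => univ.sup n, fun _ hM n hn =>
    Fintype.mem_piFinset.2 fun i => mem_Iic.2 <|
      (le_sup (f := n) (mem_univ i)).trans ((le_sup (f := fun n => univ.sup n) hn).trans hM)⟩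

lemma tendsto_mzvTrunc {k : List ℕ} {C : ℝ} (hC : ∀ N, mzvTrunc N k ≤ C) :
    Tendsto (fun N => mzvTrunc N k) atTop (𝓝 (mzv k)) := by
  have hterm : 0 ≤ mzvTerm k := fun n => by unfold mzvTerm; split_ifs <;> positivity
  have hsum : Summable (mzvTerm k) := summable_of_sum_le hterm fun s => by
    obtain ⟨N, hN⟩ := ((tendsto_piFinset_Iic _).eventually (eventually_ge_atTop s)).exists
    calc ∑ n ∈ s, mzvTerm k n ≤ ∑ n ∈ Fintype.piFinset (fun _ => Iic N), mzvTerm k n :=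
          sum_le_sum_of_subset_of_nonneg hN fun n _ _ => hterm n
      _ ≤ C := (sum_piFinset_mzvTerm N k).trans_le (hC N)
  have h := hsum.hasSum.comp (tendsto_piFinset_Iic (Fin k.length))
  simp only [Function.comp_def, sum_piFinset_mzvTerm] at h
  exact h

lemma toSeq_replicate_false_append (j : ℕ) (w : List Bool) :
    toSeq (List.replicate j false ++ true :: w) = (j + 1) :: toSeq w := by
  induction j with
  | zero => rfl
  | succ j ih => simp only [List.replicate_succ, List.cons_append, toSeq, ih]

lemma toSeq_zW_append {p : ℕ} (hp : 1 ≤ p) (w : List Bool) : toSeq (zW p ++ w) = p :: toSeq w := by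
  rw [zW, List.append_assoc, List.singleton_append, toSeq_replicate_false_append,
    Nat.sub_add_cancel hp]

lemma false_cons_zW {p : ℕ} (hp : 1 ≤ p) : false :: zW p = zW (p + 1) := by
  obtain ⟨j, rfl⟩ := Nat.exists_eq_add_of_le' hp
  rfl

/-- The words spanning `H¹ = ℚ1 + Hy`, i.e. the products `z_{k₁} ⋯ z_{k_l}` of the words
`z_k = zW k`. -/
inductive IsH1Word : List Bool → Prop
  | nil : IsH1Word []
  | zW_append {p : ℕ} {u : List Bool} : 1 ≤ p → IsH1Word u → IsH1Word (zW p ++ u)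

namespace IsH1Word

lemma of_getLast? : ∀ {w : List Bool}, w.getLast? ≠ some false → IsH1Word w
  | [], _ => nil
  | b :: r, h => by
    have hr : IsH1Word r := of_getLast? fun h' => h (by simp [List.getLast?_cons, h'])
    cases b with
    | true => exact zW_append (u := r) le_rfl hr
    | false =>
      cases hr with
      | nil => simp at h
      | zW_append hp hu =>
        rw [← List.cons_append, false_cons_zW hp]
        exact zW_append (by omega) hu

lemma eq_nil_or_getLast?_eq_true {w : List Bool} (hw : IsH1Word w) :
    w = [] ∨ w.getLast? = some true := by
  induction hw with
  | nil => exact Or.inl rfl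
  | zW_append _ _ ih =>
    right
    rcases ih with rfl | h
    · simp [zW]
    · simp [List.getLast?_append, h]

lemma one_le_of_mem_toSeq {w : List Bool} (hw : IsH1Word w) : ∀ k ∈ toSeq w, 1 ≤ k := by
  induction hw with
  | nil => simp [toSeq]
  | zW_append hp _ ih =>
    rw [toSeq_zW_append hp]
    exact List.forall_mem_cons.2 ⟨hp, ih⟩

lemma induction₂ {P : List Bool → List Bool → Prop}
    (nil_left : ∀ w, IsH1Word w → P [] w) (nil_right : ∀ w, IsH1Word w → P w [])
    (zW_append : ∀ p q u₁ u₂, 1 ≤ p → 1 ≤ q → IsH1Word u₁ → IsH1Word u₂ →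
      P u₁ (zW q ++ u₂) → P (zW p ++ u₁) u₂ → P u₁ u₂ → P (zW p ++ u₁) (zW q ++ u₂))
    {w₁ w₂ : List Bool} (h₁ : IsH1Word w₁) (h₂ : IsH1Word w₂) : P w₁ w₂ := by
  induction h₁ generalizing w₂ with
  | nil => exact nil_left w₂ h₂
  | zW_append hp hu₁ ih₁ =>
    induction h₂ with
    | nil => exact nil_right _ (.zW_append hp hu₁)
    | zW_append hq hu₂ ih₂ =>
      exact zW_append _ _ _ _ hp hq hu₁ hu₂ (ih₁ (.zW_append hq hu₂)) ih₂ (ih₁ hu₂)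

end IsH1Word

lemma IsAdmissibleWord.isH1Word {w : List Bool} (hw : IsAdmissibleWord w) : IsH1Word w :=
  IsH1Word.of_getLast? (by rcases hw with rfl | ⟨-, h⟩ <;> simp [*])

lemma IsAdmissibleWord.exists_eq_zW_append {w : List Bool} (hw : IsAdmissibleWord w)
    (hne : w ≠ []) : ∃ p u, 2 ≤ p ∧ IsH1Word u ∧ w = zW p ++ u := by
  obtain ⟨hhead, -⟩ := hw.resolve_left hne
  cases hw.isH1Word with
  | nil => exact absurd rfl hne
  | @zW_append p u hp hu =>
    refine ⟨p, u, ?_, hu, rfl⟩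
    by_contra hlt
    obtain rfl : p = 1 := by omega
    simp [zW] at hhead

lemma isAdmissibleWord_zW_append {p : ℕ} (hp : 2 ≤ p) {u : List Bool} (hu : IsH1Word u) :
    IsAdmissibleWord (zW p ++ u) := by
  refine Or.inr ⟨?_, ((IsH1Word.zW_append (by omega) hu).eq_nil_or_getLast?_eq_true).resolve_left
    (by simp [zW])⟩
  obtain ⟨j, rfl⟩ : ∃ j, p = j + 1 := ⟨p - 1, by omega⟩
  rw [← false_cons_zW (by omega)]
  rfl

lemma wordAlg_nil : wordAlg [] = 1 := map_one _

lemma wordAlg_append (u w : List Bool) : wordAlg (u ++ w) = wordAlg u * wordAlg w :=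
  map_mul _ _ _

noncomputable def wordEval (val : List Bool → ℝ) : H →ₗ[ℚ] ℝ where
  toFun f := Finsupp.sum f.coeff fun w c => (c : ℝ) * val (FreeMonoid.toList w)
  map_add' f g := Finsupp.sum_add_index' (by simp) (by intros; push_cast; ring)
  map_smul' q f := by
    simp only [MonoidAlgebra.coeff_smul, RingHom.id_apply, Rat.smul_def, Finsupp.mul_sum]
    rw [Finsupp.sum_smul_index (by simp)]
    exact Finsupp.sum_congr fun w _ => by push_cast; ring

lemma wordEval_wordAlg (val : List Bool → ℝ) (w : List Bool) : wordEval val (wordAlg w) = val w := by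
  change Finsupp.sum (wordAlg w).coeff (fun u c => (c : ℝ) * val u.toList) = val w
  rw [wordAlg, MonoidAlgebra.of_apply, MonoidAlgebra.coeff_single,
    Finsupp.sum_single_index (by simp)]
  simp

lemma zhat_eq_wordEval (f : H) : zhat f = wordEval zetaWord f := rfl

noncomputable def truncZhat (N : ℕ) : H →ₗ[ℚ] ℝ := wordEval fun w => mzvTrunc N (toSeq w)

lemma truncZhat_wordAlg (N : ℕ) (w : List Bool) : truncZhat N (wordAlg w) = mzvTrunc N (toSeq w) :=
  wordEval_wordAlg _ w

lemma truncZhat_one (N : ℕ) : truncZhat N 1 = 1 := by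
  rw [← wordAlg_nil, truncZhat_wordAlg]
  rfl

lemma truncZhat_zW_mul {r : ℕ} (hr : 1 ≤ r) (N : ℕ) (g : H) :
    truncZhat N (wordAlg (zW r) * g) = ∑ n ∈ Icc 1 N, ((n : ℝ) ^ r)⁻¹ * truncZhat (n - 1) g := by
  induction g using MonoidAlgebra.induction_on generalizing N with
  | of m =>
    rw [show MonoidAlgebra.of ℚ _ m = wordAlg m.toList from rfl, ← wordAlg_append]
    simp only [truncZhat_wordAlg, toSeq_zW_append hr, mzvTrunc_cons]
  | add f g hf hg => simp only [mul_add, map_add, hf, hg, sum_add_distrib]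
  | smul q f hf => simp only [mul_smul_comm, map_smul, hf, smul_sum]

lemma tendsto_mzvTrunc_toSeq {w : List Bool} (hw : IsAdmissibleWord w) :
    Tendsto (fun N => mzvTrunc N (toSeq w)) atTop (𝓝 (zetaWord w)) := by
  rcases eq_or_ne w [] with rfl | hne
  · simp [zetaWord, toSeq]
  rw [zetaWord, if_neg hne, if_pos (hw.resolve_left hne)]
  obtain ⟨p, u, hp, hu, rfl⟩ := hw.exists_eq_zW_append hne
  rw [toSeq_zW_append (by omega)]
  exact tendsto_mzvTrunc fun N => mzvTrunc_cons_le_two hp N hu.one_le_of_mem_toSeq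

lemma tendsto_truncZhat {f : H} (hf : f ∈ H0) :
    Tendsto (fun N => truncZhat N f) atTop (𝓝 (zhat f)) := by
  induction hf using Submodule.span_induction with
  | mem x hx =>
    obtain ⟨w, hw, rfl⟩ := hx
    simpa only [truncZhat_wordAlg, zhat_eq_wordEval, wordEval_wordAlg] using
      tendsto_mzvTrunc_toSeq hw
  | zero => simp [zhat_eq_wordEval]
  | add x y _ _ hx hy => simpa only [map_add, zhat_eq_wordEval] using hx.add hy
  | smul a x _ hx => simpa only [map_smul, zhat_eq_wordEval, Rat.smul_def] using hx.const_mul (a : ℝ)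

noncomputable def H1 : Submodule ℚ H :=
  Submodule.span ℚ {h : H | ∃ w : List Bool, IsH1Word w ∧ h = wordAlg w}

lemma zW_mul_mem {r : ℕ} {M : Submodule ℚ H} (hM : ∀ u, IsH1Word u → wordAlg (zW r ++ u) ∈ M)
    {g : H} (hg : g ∈ H1) : wordAlg (zW r) * g ∈ M := by
  induction hg using Submodule.span_induction with
  | mem x hx =>
    obtain ⟨u, hu, rfl⟩ := hx
    exact wordAlg_append (zW r) u ▸ hM u hu
  | zero => simp
  | add x y _ _ hx hy => simpa only [mul_add] using add_mem hx hy
  | smul a x _ hx => simpa only [mul_smul_comm] using M.smul_mem a hx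

structure IsHarmonicProduct (st : H →ₗ[ℚ] H →ₗ[ℚ] H) : Prop where
  one_left : ∀ w : List Bool, st 1 (wordAlg w) = wordAlg w
  one_right : ∀ w : List Bool, st (wordAlg w) 1 = wordAlg w
  zW_append_zW_append : ∀ (p q : ℕ), 1 ≤ p → 1 ≤ q → ∀ (w₁ w₂ : List Bool),
    st (wordAlg (zW p ++ w₁)) (wordAlg (zW q ++ w₂)) =
      wordAlg (zW p) * st (wordAlg w₁) (wordAlg (zW q ++ w₂)) +
        wordAlg (zW q) * st (wordAlg (zW p ++ w₁)) (wordAlg w₂) +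
        wordAlg (zW (p + q)) * st (wordAlg w₁) (wordAlg w₂)

namespace IsHarmonicProduct

variable {st : H →ₗ[ℚ] H →ₗ[ℚ] H}

lemma mem_H1 (hst : IsHarmonicProduct st) {w₁ w₂ : List Bool} (h₁ : IsH1Word w₁)
    (h₂ : IsH1Word w₂) : st (wordAlg w₁) (wordAlg w₂) ∈ H1 := by
  refine IsH1Word.induction₂ (P := fun w₁ w₂ => st (wordAlg w₁) (wordAlg w₂) ∈ H1)
    (fun w hw => ?_) (fun w hw => ?_) (fun p q u₁ u₂ hp hq _ _ ih₁ ih₂ ih₃ => ?_) h₁ h₂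
  · rw [wordAlg_nil, hst.one_left]
    exact Submodule.subset_span ⟨w, hw, rfl⟩
  · rw [wordAlg_nil, hst.one_right]
    exact Submodule.subset_span ⟨w, hw, rfl⟩
  · have hmem : ∀ {r}, 1 ≤ r → ∀ u, IsH1Word u → wordAlg (zW r ++ u) ∈ H1 :=
      fun hr u hu => Submodule.subset_span ⟨_, .zW_append hr hu, rfl⟩
    rw [hst.zW_append_zW_append p q hp hq]
    exact add_mem (add_mem (zW_mul_mem (hmem hp) ih₁) (zW_mul_mem (hmem hq) ih₂))
      (zW_mul_mem (hmem (by omega)) ih₃)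

lemma truncZhat_eq_mul_of_isH1Word (hst : IsHarmonicProduct st) {w₁ w₂ : List Bool}
    (h₁ : IsH1Word w₁) (h₂ : IsH1Word w₂) (N : ℕ) :
    truncZhat N (st (wordAlg w₁) (wordAlg w₂)) =
      truncZhat N (wordAlg w₁) * truncZhat N (wordAlg w₂) := by
  refine IsH1Word.induction₂ (P := fun w₁ w₂ => ∀ N, truncZhat N (st (wordAlg w₁) (wordAlg w₂)) =
      truncZhat N (wordAlg w₁) * truncZhat N (wordAlg w₂))
    (fun w _ N => ?_) (fun w _ N => ?_) (fun p q u₁ u₂ hp hq _ _ ih₁ ih₂ ih₃ N => ?_) h₁ h₂ N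
  · rw [wordAlg_nil, hst.one_left, truncZhat_one, one_mul]
  · rw [wordAlg_nil, hst.one_right, truncZhat_one, mul_one]
  · rw [hst.zW_append_zW_append p q hp hq, map_add, map_add, truncZhat_zW_mul hp,
      truncZhat_zW_mul hq, truncZhat_zW_mul (by omega)]
    simp only [ih₁, ih₂, ih₃]
    simp only [wordAlg_append, truncZhat_zW_mul hp, truncZhat_zW_mul hq]
    rw [sum_Icc_mul_sum_Icc, ← sum_add_distrib, ← sum_add_distrib]
    refine sum_congr rfl fun n _ => ?_
    rw [pow_add, mul_inv]
    ring

lemma mem_H0_of_isAdmissibleWord (hst : IsHarmonicProduct st) {w₁ w₂ : List Bool}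
    (h₁ : IsAdmissibleWord w₁) (h₂ : IsAdmissibleWord w₂) : st (wordAlg w₁) (wordAlg w₂) ∈ H0 := by
  rcases eq_or_ne w₁ [] with rfl | hne₁
  · rw [wordAlg_nil, hst.one_left]
    exact Submodule.subset_span ⟨w₂, h₂, rfl⟩
  rcases eq_or_ne w₂ [] with rfl | hne₂
  · rw [wordAlg_nil, hst.one_right]
    exact Submodule.subset_span ⟨w₁, h₁, rfl⟩
  obtain ⟨p, u₁, hp, hu₁, rfl⟩ := h₁.exists_eq_zW_append hne₁
  obtain ⟨q, u₂, hq, hu₂, rfl⟩ := h₂.exists_eq_zW_append hne₂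
  have hmem : ∀ {r}, 2 ≤ r → ∀ u, IsH1Word u → wordAlg (zW r ++ u) ∈ H0 :=
    fun hr u hu => Submodule.subset_span ⟨_, isAdmissibleWord_zW_append hr hu, rfl⟩
  rw [hst.zW_append_zW_append p q (by omega) (by omega)]
  exact add_mem (add_mem (zW_mul_mem (hmem hp) (hst.mem_H1 hu₁ (.zW_append (by omega) hu₂)))
    (zW_mul_mem (hmem hq) (hst.mem_H1 (.zW_append (by omega) hu₁) hu₂)))
    (zW_mul_mem (hmem (by omega)) (hst.mem_H1 hu₁ hu₂))

lemma mem_H0 (hst : IsHarmonicProduct st) {u v : H} (hu : u ∈ H0) (hv : v ∈ H0) :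
    st u v ∈ H0 := by
  have h := Submodule.apply_mem_map₂ st hu hv
  rw [H0, Submodule.map₂_span_span] at h
  refine Submodule.span_le.2 ?_ h
  rintro _ ⟨_, ⟨w₁, h₁, rfl⟩, _, ⟨w₂, h₂, rfl⟩, rfl⟩
  exact hst.mem_H0_of_isAdmissibleWord h₁ h₂

lemma truncZhat_eq_mul (hst : IsHarmonicProduct st) {u v : H} (hu : u ∈ H0) (hv : v ∈ H0)
    (N : ℕ) : truncZhat N (st u v) = truncZhat N u * truncZhat N v :=
  LinearMap.eqOn_span₂ (B := st.compr₂ (truncZhat N))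
    (B' := (LinearMap.mul ℚ ℝ).compl₁₂ (truncZhat N) (truncZhat N))
    (by
      rintro _ ⟨w₁, h₁, rfl⟩ _ ⟨w₂, h₂, rfl⟩
      simpa using hst.truncZhat_eq_mul_of_isH1Word h₁.isH1Word h₂.isH1Word N) hu hv

end IsHarmonicProduct

theorem zhat_harmonic_hom_general (st : H →ₗ[ℚ] H →ₗ[ℚ] H)
    (hone : ∀ w : List Bool, st 1 (wordAlg w) = wordAlg w ∧ st (wordAlg w) 1 = wordAlg w)
    (hrec : ∀ (p q : ℕ), 1 ≤ p → 1 ≤ q → ∀ (w₁ w₂ : List Bool),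
      st (wordAlg (zW p ++ w₁)) (wordAlg (zW q ++ w₂)) =
        wordAlg (zW p) * st (wordAlg w₁) (wordAlg (zW q ++ w₂)) +
          wordAlg (zW q) * st (wordAlg (zW p ++ w₁)) (wordAlg w₂) +
          wordAlg (zW (p + q)) * st (wordAlg w₁) (wordAlg w₂))
    (u v : H) (hu : u ∈ H0) (hv : v ∈ H0) :
    st u v ∈ H0 ∧ zhat (st u v) = zhat u * zhat v := by
  have hst : IsHarmonicProduct st := ⟨fun w => (hone w).1, fun w => (hone w).2, hrec⟩
  have huv := hst.mem_H0 hu hv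
  refine ⟨huv, tendsto_nhds_unique (tendsto_truncZhat huv) ?_⟩
  simpa only [hst.truncZhat_eq_mul hu hv] using (tendsto_truncZhat hu).mul (tendsto_truncZhat hv)

/-- **Theorem 4.2 (harmonic-product homomorphism).**  Let `*` be the (unique) ℚ-bilinear
harmonic product on `H`, i.e. `1 * w = w * 1 = w` for each word `w`,
`x^p * w = w * x^p = w x^p` for `p ≥ 1`, and
`(x^{p-1}y w₁) * (x^{q-1}y w₂)
  = x^{p-1}y (w₁ * x^{q-1}y w₂) + x^{q-1}y (x^{p-1}y w₁ * w₂) + x^{p+q-1}y (w₁ * w₂)`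
for `p, q ≥ 1` and words `w₁, w₂`.
Then for all `u, v ∈ H⁰`, `u * v ∈ H⁰` and `ζ̂(u * v) = ζ̂(u)·ζ̂(v)`. -/
theorem zhat_harmonic_hom (st : H →ₗ[ℚ] H →ₗ[ℚ] H)
    (hone : ∀ w : List Bool, st 1 (wordAlg w) = wordAlg w ∧ st (wordAlg w) 1 = wordAlg w)
    (hx : ∀ (p : ℕ), 1 ≤ p → ∀ w : List Bool,
      st (wordAlg (List.replicate p false)) (wordAlg w) =
          wordAlg (w ++ List.replicate p false) ∧
        st (wordAlg w) (wordAlg (List.replicate p false)) =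
          wordAlg (w ++ List.replicate p false))
    (hrec : ∀ (p q : ℕ), 1 ≤ p → 1 ≤ q → ∀ (w₁ w₂ : List Bool),
      st (wordAlg (zW p ++ w₁)) (wordAlg (zW q ++ w₂)) =
        wordAlg (zW p) * st (wordAlg w₁) (wordAlg (zW q ++ w₂)) +
          wordAlg (zW q) * st (wordAlg (zW p ++ w₁)) (wordAlg w₂) +
          wordAlg (zW (p + q)) * st (wordAlg w₁) (wordAlg w₂))
    (u v : H) (hu : u ∈ H0) (hv : v ∈ H0) :
    st u v ∈ H0 ∧ zhat (st u v) = zhat u * zhat v :=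
  zhat_harmonic_hom_general st hone hrec u v hu hv
end

section
/- (Proposition 2.2.) Let ψ : H → End_ℚ(H) be a cyclic derivation of H. Define ψ̄ : H → End_ℚ(H) by ψ̄(f)(g) = τ( ψ(τ(f))(τ(g)) ) for all f, g ∈ H. Then ψ̄ is also a cyclic derivation of H. -/
/-- **Proposition 2.2.**  Let `τ` be the anti-automorphism of `H` exchanging `x` and `y`,
and let `ψ : H → End_ℚ(H)` be a cyclic derivation, i.e. a ℚ-linear map with
`ψ(f₁f₂)(f) = ψ(f₁)(f₂f) + ψ(f₂)(ff₁)` for all `f₁, f₂, f`.  Then the map `ψ̄` given by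
`ψ̄(f)(g) = τ(ψ(τf)(τg))` is again a cyclic derivation of `H` (in particular it exists as a
ℚ-linear map `H →ₗ End_ℚ(H)`). -/
theorem conjugate_cyclic_derivation
    (tau : H →ₗ[ℚ] H) (tau_mul : ∀ u v : H, tau (u * v) = tau v * tau u)
    (tau_x : tau X = Y) (tau_y : tau Y = X)
    (psi : H →ₗ[ℚ] H →ₗ[ℚ] H)
    (hpsi : ∀ f₁ f₂ f : H, psi (f₁ * f₂) f = psi f₁ (f₂ * f) + psi f₂ (f * f₁)) :
    ∃ psib : H →ₗ[ℚ] H →ₗ[ℚ] H,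
      (∀ f g : H, psib f g = tau (psi (tau f) (tau g))) ∧
        ∀ f₁ f₂ f : H, psib (f₁ * f₂) f = psib f₁ (f₂ * f) + psib f₂ (f * f₁) := by
  refine ⟨LinearMap.mk₂ ℚ (fun f g => tau (psi (tau f) (tau g)))
    (fun a b g => by simp) (fun c a g => by simp)
    (fun f a b => by simp) (fun c f a => by simp), fun f g => rfl, ?_⟩
  intro f₁ f₂ f
  simp only [LinearMap.mk₂_apply, tau_mul, hpsi, map_add]
  rw [add_comm]
end

section
/- (Proposition 5.4, explicit form.) Let C be the unique cyclic derivation of H with C(x) = 0 (the zero endomorphism) and C(y)(f) = x f y for all f ∈ H. Then for all integers n, m ≥ 1, C(x^n y^m)(1) = ∑_{i=1}^{m} x y^{m−i} x^n y^{i} (i.e. C(x^n y^m)(1) = x y^{m−1} x^n y + x y^{m−2} x^n y² + ⋯ + x^{n+1} y^m). -/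
/-- **Proposition 5.4 (explicit form).**  Let `C` be the cyclic derivation of `H` with
`C(x) = 0` and `C(y)(f) = xfy` for all `f`.  Then for `n, m ≥ 1`,
`C(x^n y^m)(1) = ∑_{i=1}^m x y^{m-i} x^n y^i`. -/
theorem cyclic_derivation_on_xn_ym
    (C : H →ₗ[ℚ] H →ₗ[ℚ] H)
    (hcyc : ∀ f₁ f₂ f : H, C (f₁ * f₂) f = C f₁ (f₂ * f) + C f₂ (f * f₁))
    (hx : C X = 0) (hy : ∀ f : H, C Y f = X * f * Y)
    (n m : ℕ) (hn : 1 ≤ n) (hm : 1 ≤ m) :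
    C (X ^ n * Y ^ m) 1 = ∑ i ∈ Finset.Icc 1 m, X * Y ^ (m - i) * X ^ n * Y ^ i := by
  -- Step 1: C (X^n) = 0 for n ≥ 1
  have hxn : ∀ k : ℕ, 1 ≤ k → ∀ f : H, C (X ^ k) f = 0 := by
    intro k hk
    induction k with
    | zero => omega
    | succ k ih =>
      intro f
      rcases Nat.eq_zero_or_pos k with h | hk1
      · subst h; simp [pow_one, hx]
      · rw [pow_succ, hcyc, ih hk1, hx]
        simp
  -- Step 2: C (Y^m) f = ∑ i in Icc 1 m, X * Y^(m-i) * f * Y^i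
  have hym : ∀ k : ℕ, 1 ≤ k → ∀ f : H,
      C (Y ^ k) f = ∑ i ∈ Finset.Icc 1 k, X * Y ^ (k - i) * f * Y ^ i := by
    intro k hk
    induction k with
    | zero => omega
    | succ k ih =>
      intro f
      rcases Nat.lt_or_ge 1 (k+1) with h | h
      · have hk1 : 1 ≤ k := Nat.lt_succ_iff.mp h
        rw [pow_succ, hcyc, ih hk1, hy]
        rw [Finset.sum_Icc_succ_top (by omega : 1 ≤ k + 1)]
        congr 1
        · apply Finset.sum_congr rfl
          intro i hi
          simp only [Finset.mem_Icc] at hi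
          have : k + 1 - i = (k - i) + 1 := by omega
          rw [this, pow_succ]
          simp only [mul_assoc]
        · rw [Nat.sub_self, pow_zero, pow_succ]
          simp only [mul_one, mul_assoc]
      · have : k = 0 := by omega
        subst this
        simp [hy, pow_one]
  -- Combine
  rw [hcyc, hxn n hn, hym m hm, zero_add]
  apply Finset.sum_congr rfl
  intro i hi
  rw [one_mul]
end
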